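/- Every finite group G of order 3^8 or 3^9 with abelianization G^ab ≅ (ZMod 3)³ and d₂(G) = 3 has trivial Schur multiplier: the second group homology H₂(G, ℤ) with trivial coefficients (in Mathlib: groupHomology) is the trivial group. -/

import Mathlib

/-!
Let `1 → R → F → G → 1` be a free presentation. The image of `R` in `F/[F,R]` is central of
index `|G| = 3^k`, so by the transfer `x^(3^k) ∈ [F,R]` for every `x ∈ [F,F]`. If every
`x ∈ R ⊓ [F,F]` is, modulo `[F,R]`, the cube of some `r ∈ R`, then `r ∈ [F,F]` because `F^ab` is
torsion free, and iterating gives `R ⊓ [F,F] = [F,R]`.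

Otherwise some `x₀ ∈ R ⊓ [F,F]` is nonzero in the `𝔽₃`-vector space `R/[F,R]R³`. Lift a basis of
`G^ab` to `f₁, f₂, f₃ ∈ F` and write `f_i³ = c_i y_i` with `c_i ∈ [F,F]`, `y_i ∈ R`. A linear
relation between `x₀, y₁, y₂, y₃` in `R/[F,R]R³` becomes, in the torsion-free group `F^ab`, a
relation between the `f_i` modulo `R`, i.e. in `G^ab`; so the four vectors are independent. A
functional on `R/[F,R]R³` whose transgression class in `H²(G, 𝔽₃)` vanishes extends to a
homomorphism `F → 𝔽₃` and therefore kills all four of them. Hence `d₂(G) ≥ 4`.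
-/

/-- `d2 G` is the `𝔽₃`-dimension of the second group cohomology `H²(G, ZMod 3)`
with trivial `G`-action. -/
noncomputable def d2 (G : Type) [Group G] : ℕ :=
  Module.finrank (ZMod 3) (groupCohomology (Rep.trivial (ZMod 3) G (ZMod 3)) 2)

/-- The abelianization of `G` is isomorphic to `(ZMod 3)³`. -/
def abIsElemTricyclic (G : Type) [Group G] : Prop :=
  Nonempty (Abelianization G ≃* Multiplicative (ZMod 3 × ZMod 3 × ZMod 3))

open Subgroup
open scoped commutatorElement

instance (ι : Type*) : IsMulTorsionFree (Abelianization (FreeGroup ι)) :=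
  Function.Injective.isMulTorsionFree
    (AddMonoidHom.toMultiplicative (FreeAbelianGroup.equivFinsupp ι).toAddMonoidHom)
    (FreeAbelianGroup.equivFinsupp ι).injective

lemma map_commutator_of_surjective {G H : Type*} [Group G] [Group H] {f : G →* H}
    (hf : Function.Surjective f) : (commutator G).map f = commutator H := by
  rw [map_commutator_eq, f.range_eq_top_of_surjective hf, ← _root_.commutator_def]

open scoped IsMulCommutative in
lemma pow_index_center_eq_one_of_mem_commutator {Q : Type*} [Group Q] [(center Q).FiniteIndex]
    {m : Q} (hm : m ∈ commutator Q) : m ^ (center Q).index = 1 := by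
  have h := Abelianization.commutator_subset_ker (MonoidHom.transferCenterPow Q) hm
  rw [← MonoidHom.transferCenterPow_apply, MonoidHom.mem_ker.1 h, OneMemClass.coe_one]

lemma eq_one_of_forall_exists_pow_eq {M : Type*} [Monoid M] {S : Set M} {n k : ℕ}
    (hdiv : ∀ m ∈ S, ∃ a ∈ S, a ^ n = m) (hexp : ∀ m ∈ S, m ^ n ^ k = 1) {m : M} (hm : m ∈ S) :
    m = 1 := by
  suffices ∀ j, ∀ m ∈ S, ∃ a ∈ S, a ^ n ^ j = m by
    obtain ⟨a, ha, rfl⟩ := this k m hm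
    exact hexp a ha
  intro j
  induction j with
  | zero => exact fun m hm => ⟨m, hm, pow_one m⟩
  | succ j ih =>
    intro m hm
    obtain ⟨a, ha, rfl⟩ := hdiv m hm
    obtain ⟨b, hb, rfl⟩ := ih a ha
    exact ⟨b, hb, by rw [← pow_mul, ← pow_succ]⟩

theorem LinearIndependent.card_le_finrank_of_dual {K V H κ : Type*} [Field K] [AddCommGroup V]
    [Module K V] [AddCommGroup H] [Module K H] [Module.Finite K H] [Fintype κ]
    (T : Module.Dual K V →ₗ[K] H) {v : κ → V} (hv : LinearIndependent K v)
    (hT : ∀ φ, T φ = 0 → ∀ i, φ (v i) = 0) : Fintype.card κ ≤ Module.finrank K H := by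
  classical
  have hdual : ∀ i, ∃ φ : Module.Dual K V, ∀ j, φ (v j) = if j = i then 1 else 0 := by
    intro i
    obtain ⟨φ, hφ⟩ := LinearMap.exists_extend ((Module.Basis.span hv).coord i)
    refine ⟨φ, fun j => ?_⟩
    have := LinearMap.congr_fun hφ (Module.Basis.span hv j)
    rw [LinearMap.comp_apply, Module.Basis.coord_apply, Module.Basis.repr_self,
      Finsupp.single_apply, Submodule.subtype_apply, Module.Basis.span_apply] at this
    rw [this]
  choose φ hφ using hdual
  refine LinearIndependent.fintype_card_le_finrank (b := fun i => T (φ i)) ?_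
  rw [Fintype.linearIndependent_iff]
  intro d hd j
  have := hT (∑ i, d i • φ i) (by simpa [map_sum] using hd) j
  simpa [hφ] using this

lemma abelianization_pow_eq_one_of_mulEquiv {G W : Type*} [Group G] [AddCommGroup W] {p : ℕ}
    [Module (ZMod p) W] (e : Abelianization G ≃* Multiplicative W) (a : Abelianization G) :
    a ^ p = 1 := e.injective <| by
  rw [map_pow, map_one, ← ofAdd_toAdd (e a), ← ofAdd_nsmul, ← Nat.cast_smul_eq_nsmul (ZMod p),
    ZMod.natCast_self, zero_smul, ofAdd_zero]

instance {k G : Type} [CommRing k] [Group G] [Finite k] [Finite G] :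
    Finite (groupCohomology.H2 (Rep.trivial k G k)) :=
  Finite.of_surjective _
    ((ModuleCat.epi_iff_surjective (groupCohomology.H2π (Rep.trivial k G k))).1 inferInstance)

section KerModComm

variable {F G : Type*} [Group F] [Group G] (π : F →* G)

def KerModComm : Type _ := π.ker ⧸ (⁅(⊤ : Subgroup F), π.ker⁆.subgroupOf π.ker)

instance : CommGroup (KerModComm π) where
  __ := QuotientGroup.Quotient.group _
  mul_comm := by
    rintro ⟨a⟩ ⟨b⟩
    refine QuotientGroup.eq.2 ?_
    show ((a * b)⁻¹ * (b * a) : F) ∈ ⁅(⊤ : Subgroup F), π.ker⁆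
    rw [show ((a * b)⁻¹ * (b * a) : F) = ⁅(b : F)⁻¹, (a : F)⁻¹⁆ by push_cast; group]
    exact commutator_mem_commutator (mem_top _) (inv_mem a.2)

namespace KerModComm

def mk : π.ker →* KerModComm π := QuotientGroup.mk' _

def toAbelianization : KerModComm π →* Abelianization F :=
  QuotientGroup.lift _ (Abelianization.of.comp π.ker.subtype) fun r hr => by
    rw [MonoidHom.mem_ker, MonoidHom.comp_apply, ← MonoidHom.mem_ker, Abelianization.ker_of]
    exact commutator_mono le_top le_top hr

variable {π}

lemma mk_eq_one_iff (r : π.ker) : mk π r = 1 ↔ (r : F) ∈ ⁅(⊤ : Subgroup F), π.ker⁆ :=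
  QuotientGroup.eq_one_iff r

lemma mk_surjective : Function.Surjective (mk π) := QuotientGroup.mk'_surjective _

lemma mk_conjNormal (f : F) (r : π.ker) : mk π (MulAut.conjNormal f r) = mk π r := by
  refine QuotientGroup.eq.2 ?_
  show ((f * r * f⁻¹)⁻¹ * r : F) ∈ ⁅(⊤ : Subgroup F), π.ker⁆
  rw [show ((f * r * f⁻¹)⁻¹ * r : F) = ⁅f, (r : F)⁻¹⁆ by group]
  exact commutator_mem_commutator (mem_top f) (inv_mem r.2)

@[simp]
lemma toAbelianization_mk (r : π.ker) :
    toAbelianization π (mk π r) = Abelianization.of (r : F) := rfl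

end KerModComm

end KerModComm

section KerModCommPow

variable {F G : Type*} [Group F] [Group G] (π : F →* G) (p : ℕ)

/-- `R/[F,R]R^p` for `R = ker π`, written additively. -/
def KerModCommPow : Type _ :=
  Additive (KerModComm π ⧸ (powMonoidHom p : KerModComm π →* KerModComm π).range)

instance : AddCommGroup (KerModCommPow π p) := inferInstanceAs (AddCommGroup (Additive _))

instance : Module (ZMod p) (KerModCommPow π p) :=
  AddCommGroup.zmodModule fun x => by
    induction x using QuotientGroup.induction_on with | H a =>
    exact (QuotientGroup.eq_one_iff (a ^ p)).2 ⟨a, rfl⟩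

def toKerModCommPow : π.ker →* Multiplicative (KerModCommPow π p) :=
  (QuotientGroup.mk' _).comp (KerModComm.mk π)

variable {π p}

lemma toKerModCommPow_conjNormal (f : F) (r : π.ker) :
    toKerModCommPow π p (MulAut.conjNormal f r) = toKerModCommPow π p r :=
  congrArg (QuotientGroup.mk' _) (KerModComm.mk_conjNormal f r)

lemma exists_mk_pow_eq_of_toKerModCommPow_eq_one {r : π.ker} (hr : toKerModCommPow π p r = 1) :
    ∃ s : π.ker, KerModComm.mk π s ^ p = KerModComm.mk π r := by
  obtain ⟨a, ha⟩ := (QuotientGroup.eq_one_iff _).1 hr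
  obtain ⟨s, rfl⟩ := KerModComm.mk_surjective a
  exact ⟨s, ha⟩

end KerModCommPow

section SchurMultiplierExponent

variable {F G : Type*} [Group F] [Group G] {π : F →* G}

lemma map_ker_le_center_quotient :
    π.ker.map (QuotientGroup.mk' ⁅(⊤ : Subgroup F), π.ker⁆) ≤
      center (F ⧸ ⁅(⊤ : Subgroup F), π.ker⁆) := by
  rintro - ⟨r, hr, rfl⟩
  refine mem_center_iff.2 fun q => ?_
  obtain ⟨f, rfl⟩ := QuotientGroup.mk'_surjective _ q
  rw [← map_mul, ← map_mul, QuotientGroup.mk'_eq_mk']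
  refine ⟨⁅r⁻¹, f⁻¹⁆, ?_, by group⟩
  rw [commutator_comm]
  exact commutator_mem_commutator (inv_mem hr) (mem_top _)

theorem pow_card_mem_commutator_ker [Finite G] (hπ : Function.Surjective π) {x : F}
    (hx : x ∈ commutator F) : x ^ Nat.card G ∈ ⁅(⊤ : Subgroup F), π.ker⁆ := by
  set K := ⁅(⊤ : Subgroup F), π.ker⁆
  have hindex : (π.ker.map (QuotientGroup.mk' K)).index = Nat.card G := by
    rw [π.ker.index_map_eq (QuotientGroup.mk'_surjective K)
      (by rw [QuotientGroup.ker_mk']; exact commutator_le_right _ _),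
      index_ker, π.range_eq_top_of_surjective hπ, card_top]
  have hdvd : (center (F ⧸ K)).index ∣ Nat.card G :=
    hindex ▸ index_dvd_of_le map_ker_le_center_quotient
  have : (center (F ⧸ K)).FiniteIndex := ⟨ne_zero_of_dvd_ne_zero Nat.card_pos.ne' hdvd⟩
  have hx' : (x : F ⧸ K) ∈ commutator (F ⧸ K) := by
    rw [← map_commutator_of_surjective (QuotientGroup.mk'_surjective K)]
    exact mem_map_of_mem _ hx
  obtain ⟨c, hc⟩ := hdvd
  rw [← QuotientGroup.eq_one_iff, QuotientGroup.mk_pow, hc, pow_mul,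
    pow_index_center_eq_one_of_mem_commutator hx', one_pow]

variable [IsMulTorsionFree (Abelianization F)] {p : ℕ}

lemma exists_mem_commutator_mk_pow_eq (hp : p ≠ 0) {r : π.ker} (hrF : (r : F) ∈ commutator F)
    (hr : toKerModCommPow π p r = 1) :
    ∃ s : π.ker, (s : F) ∈ commutator F ∧ KerModComm.mk π s ^ p = KerModComm.mk π r := by
  obtain ⟨s, hs⟩ := exists_mk_pow_eq_of_toKerModCommPow_eq_one hr
  refine ⟨s, ?_, hs⟩
  rw [← Abelianization.ker_of, MonoidHom.mem_ker]
  apply IsMulTorsionFree.pow_left_injective hp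
  have := congrArg (KerModComm.toAbelianization π) hs
  rw [map_pow, KerModComm.toAbelianization_mk, KerModComm.toAbelianization_mk] at this
  simp only [this, one_pow]
  rwa [← MonoidHom.mem_ker, Abelianization.ker_of]

theorem inf_commutator_le_of_forall_toKerModCommPow_eq_one [Finite G]
    (hπ : Function.Surjective π) (hp : p ≠ 0) {k : ℕ} (hG : Nat.card G = p ^ k)
    (h : ∀ r : π.ker, (r : F) ∈ commutator F → toKerModCommPow π p r = 1) :
    π.ker ⊓ commutator F ≤ ⁅(⊤ : Subgroup F), π.ker⁆ := by
  rintro x ⟨hxR, hxF⟩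
  set S := KerModComm.mk π '' {r | (r : F) ∈ commutator F}
  have hdiv : ∀ m ∈ S, ∃ a ∈ S, a ^ p = m := by
    rintro - ⟨r, hr, rfl⟩
    obtain ⟨s, hsF, hs⟩ := exists_mem_commutator_mk_pow_eq hp hr (h r hr)
    exact ⟨_, ⟨s, hsF, rfl⟩, hs⟩
  have hexp : ∀ m ∈ S, m ^ p ^ k = 1 := by
    rintro - ⟨r, hr, rfl⟩
    rw [← map_pow, KerModComm.mk_eq_one_iff, ← hG]
    exact pow_card_mem_commutator_ker hπ hr
  exact (KerModComm.mk_eq_one_iff ⟨x, hxR⟩).1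
    (eq_one_of_forall_exists_pow_eq hdiv hexp ⟨⟨x, hxR⟩, hxF, rfl⟩)

end SchurMultiplierExponent

section Transgression

open groupCohomology Function

variable {F : Type*} {G k : Type} {V : Type*} [Group F] [Group G] [CommRing k] [AddCommGroup V]
  [Module k V] {π : F →* G} (hπ : Surjective π)

noncomputable def kerPart (f : F) : π.ker :=
  ⟨f * (surjInv hπ (π f))⁻¹, by
    rw [MonoidHom.mem_ker, map_mul, map_inv, surjInv_eq hπ, mul_inv_cancel]⟩

lemma kerPart_surjInv (g : G) : kerPart hπ (surjInv hπ g) = 1 :=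
  Subtype.ext (by simp [kerPart, surjInv_eq hπ])

lemma kerPart_of_mem_ker (r : π.ker) : kerPart hπ r = r * kerPart hπ 1 :=
  Subtype.ext (by simp [kerPart, MonoidHom.mem_ker.1 r.2])

lemma kerPart_mul (f₁ f₂ : F) :
    kerPart hπ (f₁ * f₂) =
      kerPart hπ f₁ * MulAut.conjNormal (surjInv hπ (π f₁)) (kerPart hπ f₂) *
        kerPart hπ (surjInv hπ (π f₁) * surjInv hπ (π f₂)) :=
  Subtype.ext <| by
    simp only [kerPart, map_mul, surjInv_eq hπ, coe_mul, MulAut.conjNormal_apply]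
    group

variable (τ : π.ker →* Multiplicative V)

/-- `kerPart hπ (s g * s h) = s g * s h * (s (g * h))⁻¹` for the section `s = surjInv hπ`. -/
noncomputable def transgressionCocycle (φ : Module.Dual k V) : G × G → k :=
  fun g => φ (τ (kerPart hπ (surjInv hπ g.1 * surjInv hπ g.2))).toAdd

lemma transgressionCocycle_mem_cocycles₂ (hτ : ∀ f r, τ (MulAut.conjNormal f r) = τ r)
    (φ : Module.Dual k V) : transgressionCocycle hπ τ φ ∈ cocycles₂ (Rep.trivial k G k) := by
  rw [mem_cocycles₂_iff]
  intro g h j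
  -- expand `kerPart (s g * s h * s j)` along both bracketings
  have := congrArg (fun r => φ (τ r).toAdd)
    (congrArg (kerPart hπ) (mul_assoc (surjInv hπ g) (surjInv hπ h) (surjInv hπ j)))
  rw [kerPart_mul hπ (surjInv hπ g * surjInv hπ h),
    kerPart_mul hπ (surjInv hπ g) (surjInv hπ h * surjInv hπ j)] at this
  simp only [kerPart_surjInv, hτ, map_mul, surjInv_eq hπ, toAdd_mul, map_add, map_one, toAdd_one,
    map_zero] at this
  simp only [transgressionCocycle, Representation.trivial_apply]
  linear_combination this

noncomputable def transgression (hτ : ∀ f r, τ (MulAut.conjNormal f r) = τ r) :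
    Module.Dual k V →ₗ[k] H2 (Rep.trivial k G k) :=
  (H2π (Rep.trivial k G k)).hom ∘ₗ
    LinearMap.codRestrict (cocycles₂ (Rep.trivial k G k))
      { toFun := transgressionCocycle hπ τ
        map_add' := fun _ _ => rfl
        map_smul' := fun _ _ => rfl }
      (transgressionCocycle_mem_cocycles₂ hπ τ hτ)

theorem exists_monoidHom_extension_of_transgression_eq_zero
    (hτ : ∀ f r, τ (MulAut.conjNormal f r) = τ r) {φ : Module.Dual k V}
    (h : transgression hπ τ hτ φ = 0) :
    ∃ ψ : F →* Multiplicative k, ∀ r : π.ker, ψ r = .ofAdd (φ (τ r).toAdd) := by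
  obtain ⟨x, hx⟩ := (H2π_eq_zero_iff _).1 h
  have hcob (g₁ g₂ : G) : transgressionCocycle hπ τ φ (g₁, g₂) = x g₂ - x (g₁ * g₂) + x g₁ := by
    have := congrFun hx (g₁, g₂)
    simp only [d₁₂_hom_apply, Representation.isTrivial_def, LinearMap.id_coe, id_eq] at this
    exact this.symm
  -- correcting `φ ∘ τ ∘ kerPart` by the cochain `x` makes it multiplicative
  let ψ : F →* Multiplicative k := MonoidHom.mk'
    (fun f => .ofAdd (φ (τ (kerPart hπ f)).toAdd + x (π f))) fun f₁ f₂ => by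
      have := hcob (π f₁) (π f₂)
      simp only [transgressionCocycle] at this
      rw [kerPart_mul hπ f₁ f₂]
      simp only [hτ, map_mul, toAdd_mul, map_add, this, ← ofAdd_add]
      ring_nf
  have hψ1 : φ (τ (kerPart hπ 1)).toAdd + x 1 = 0 := by
    simpa [ψ] using congrArg Multiplicative.toAdd (map_one ψ)
  refine ⟨ψ, fun r => ?_⟩
  simp only [ψ, MonoidHom.mk'_apply, kerPart_of_mem_ker hπ r, MonoidHom.mem_ker.1 r.2, map_mul,
    toAdd_mul, map_add, add_assoc, hψ1, add_zero]

end Transgression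

section ElementaryAbelianization

open Function Module

variable {F : Type*} {G : Type} [Group F] [Group G] {π : F →* G} {p : ℕ}

lemma toAdd_apply_eq_zero_of_transgression_eq_zero [Fact p.Prime] (hπ : Surjective π)
    {V : Type*} [AddCommGroup V] [Module (ZMod p) V] {τ : π.ker →* Multiplicative V}
    (hτ : ∀ f r, τ (MulAut.conjNormal f r) = τ r) {φ : Module.Dual (ZMod p) V}
    (h : transgression hπ τ hτ φ = 0) {r : π.ker} {f : F}
    (hr : Abelianization.of (r : F) = Abelianization.of f ^ p) : φ (τ r).toAdd = 0 := by
  obtain ⟨ψ, hψ⟩ := exists_monoidHom_extension_of_transgression_eq_zero hπ τ hτ h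
  have := hψ r
  rw [← Abelianization.lift_apply_of ψ, hr, map_pow, Abelianization.lift_apply_of] at this
  simpa [← ofAdd_nsmul, nsmul_eq_mul] using congrArg Multiplicative.toAdd this.symm

lemma exists_ker_abelianization_eq_pow (hπ : Surjective π) {g : G}
    (hg : Abelianization.of g ^ p = 1) :
    ∃ f : F, ∃ y : π.ker, π f = g ∧ Abelianization.of (y : F) = Abelianization.of f ^ p := by
  obtain ⟨f, rfl⟩ := hπ g
  have hfp : π (f ^ p) ∈ (commutator F).map π := by
    rw [map_commutator_of_surjective hπ, ← Abelianization.ker_of, MonoidHom.mem_ker, map_pow,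
      map_pow, hg]
  obtain ⟨c, hc, hcf⟩ := hfp
  refine ⟨f, ⟨c⁻¹ * f ^ p, by rw [MonoidHom.mem_ker, map_mul, map_inv, hcf, inv_mul_cancel]⟩,
    rfl, ?_⟩
  rw [SetLike.mem_coe, ← Abelianization.ker_of, MonoidHom.mem_ker] at hc
  simp [hc]

variable [IsMulTorsionFree (Abelianization F)] {W : Type*} [AddCommGroup W] [Module (ZMod p) W]

lemma prod_abelianization_pow_eq_one_of_toKerModCommPow (hp : p ≠ 0) {κ : Type*} [Fintype κ]
    {f : κ → F} {y : κ → π.ker}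
    (hy : ∀ i, Abelianization.of (y i : F) = Abelianization.of (f i) ^ p) {x : π.ker}
    (hx : (x : F) ∈ commutator F) {n : κ → ℕ}
    (h : toKerModCommPow π p x * ∏ i, toKerModCommPow π p (y i) ^ n i = 1) :
    ∏ i, Abelianization.of (π (f i)) ^ n i = 1 := by
  rw [← Abelianization.ker_of, MonoidHom.mem_ker] at hx
  have h' : QuotientGroup.mk' (powMonoidHom p).range
      (KerModComm.mk π x * ∏ i, KerModComm.mk π (y i) ^ n i) = 1 := by
    simp only [map_mul, map_prod, map_pow]
    exact h
  obtain ⟨b, hb⟩ := (QuotientGroup.eq_one_iff _).1 h'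
  obtain ⟨s, rfl⟩ := KerModComm.mk_surjective b
  have hroot : Abelianization.of (s : F) = ∏ i, Abelianization.of (f i) ^ n i := by
    refine IsMulTorsionFree.pow_left_injective hp ?_
    have := congrArg (KerModComm.toAbelianization π) hb
    simp only [powMonoidHom_apply, map_pow, map_mul, map_prod, KerModComm.toAbelianization_mk, hy,
      hx, one_mul] at this
    simp only [this, ← Finset.prod_pow, ← pow_mul, mul_comm]
  simpa [map_prod, Abelianization.map_of, MonoidHom.mem_ker.1 s.2] using
    (congrArg (Abelianization.map π) hroot).symm

lemma eq_zero_of_toAdd_add_sum_smul_eq_zero [Fact p.Prime] {κ : Type*} [Fintype κ]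
    (e : Abelianization G ≃* Multiplicative W) (b : Basis κ (ZMod p) W) {f : κ → F}
    {y : κ → π.ker}
    (hf : ∀ i, e (Abelianization.of (π (f i))) = .ofAdd (b i))
    (hy : ∀ i, Abelianization.of (y i : F) = Abelianization.of (f i) ^ p) {x : π.ker}
    (hx : (x : F) ∈ commutator F) {c : κ → ZMod p}
    (h : (toKerModCommPow π p x).toAdd + ∑ i, c i • (toKerModCommPow π p (y i)).toAdd = 0) :
    c = 0 := by
  have hprod := prod_abelianization_pow_eq_one_of_toKerModCommPow (Fact.out : p.Prime).ne_zero hy hx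
    (n := fun i => (c i).val) <| Multiplicative.toAdd.injective <| by
      simpa [toAdd_prod, ← Nat.cast_smul_eq_nsmul (ZMod p), ZMod.natCast_zmod_val] using h
  have := congrArg (fun a => (e a).toAdd) hprod
  simp only [map_prod, map_pow, hf, toAdd_prod, toAdd_pow, map_one, toAdd_one,
    ← Nat.cast_smul_eq_nsmul (ZMod p), ZMod.natCast_zmod_val] at this
  funext i
  exact Fintype.linearIndependent_iff.1 b.linearIndependent c this i

lemma linearIndependent_finCons_toKerModCommPow [Fact p.Prime] {n : ℕ}
    (e : Abelianization G ≃* Multiplicative W) (b : Basis (Fin n) (ZMod p) W) {f : Fin n → F}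
    {y : Fin n → π.ker} (hf : ∀ i, e (Abelianization.of (π (f i))) = .ofAdd (b i))
    (hy : ∀ i, Abelianization.of (y i : F) = Abelianization.of (f i) ^ p) {x : π.ker}
    (hxF : (x : F) ∈ commutator F) (hx : toKerModCommPow π p x ≠ 1) :
    LinearIndependent (ZMod p) (Fin.cons (toKerModCommPow π p x).toAdd
      fun i => (toKerModCommPow π p (y i)).toAdd : Fin (n + 1) → KerModCommPow π p) := by
  refine LinearIndependent.finCons' _ _ ?_ fun a z hz haz => ?_
  · rw [Fintype.linearIndependent_iff]
    intro c hc
    exact congrFun (eq_zero_of_toAdd_add_sum_smul_eq_zero e b hf hy (x := 1) (one_mem _)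
      (by simpa using hc))
  · obtain ⟨c, rfl⟩ := (Submodule.mem_span_range_iff_exists_fun _).1 hz
    obtain rfl : c = 0 := eq_zero_of_toAdd_add_sum_smul_eq_zero e b hf hy
      (x := x ^ a.val) (pow_mem hxF a.val) <| by
        simpa [← Nat.cast_smul_eq_nsmul (ZMod p), ZMod.natCast_zmod_val] using haz
    simpa [hx] using haz

theorem finrank_add_one_le_finrank_H2 [Fact p.Prime] [Finite G] (hπ : Surjective π)
    [FiniteDimensional (ZMod p) W] (e : Abelianization G ≃* Multiplicative W) {x : π.ker}
    (hxF : (x : F) ∈ commutator F) (hx : toKerModCommPow π p x ≠ 1) :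
    finrank (ZMod p) W + 1 ≤
      finrank (ZMod p) (groupCohomology.H2 (Rep.trivial (ZMod p) G (ZMod p))) := by
  let b := finBasis (ZMod p) W
  have hlift (i) : ∃ g : G, e (Abelianization.of g) = .ofAdd (b i) := by
    obtain ⟨a, ha⟩ := e.surjective (.ofAdd (b i))
    obtain ⟨g, rfl⟩ := QuotientGroup.mk_surjective a
    exact ⟨g, ha⟩
  choose g hg using hlift
  choose f y hf hy using fun i => exists_ker_abelianization_eq_pow hπ
    (abelianization_pow_eq_one_of_mulEquiv (p := p) e (.of (g i)))
  set E : Fin (finrank (ZMod p) W + 1) → KerModCommPow π p :=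
    Fin.cons (toKerModCommPow π p x).toAdd fun i => (toKerModCommPow π p (y i)).toAdd
  have hE : LinearIndependent (ZMod p) E :=
    linearIndependent_finCons_toKerModCommPow e b (fun i => hf i ▸ hg i) hy hxF hx
  have hvanish (φ : Dual (ZMod p) (KerModCommPow π p))
      (hφ : transgression hπ _ toKerModCommPow_conjNormal φ = 0) (i) : φ (E i) = 0 := by
    refine Fin.cases ?_ (fun i => ?_) i
    · refine toAdd_apply_eq_zero_of_transgression_eq_zero hπ _ hφ (f := 1) ?_
      rwa [map_one, one_pow, ← MonoidHom.mem_ker, Abelianization.ker_of]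
    · exact toAdd_apply_eq_zero_of_transgression_eq_zero hπ _ hφ (hy i)
  simpa using hE.card_le_finrank_of_dual _ hvanish

end ElementaryAbelianization

/-- The Schur multiplier is expressed through Hopf's formula: for a free presentation
`1 → R → F → G → 1`, `H₂(G, ℤ) ≅ (R ⊓ [F, F]) / [F, R]`. -/
theorem trivial_schur_multiplier (G : Type) [Group G]
    (hcard : Nat.card G = 3 ^ 8 ∨ Nat.card G = 3 ^ 9)
    (hab : abIsElemTricyclic G) (hd2 : d2 G = 3) :
    ∀ (ι : Type) (π : FreeGroup ι →* G), Function.Surjective π →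
      π.ker ⊓ commutator (FreeGroup ι) = ⁅(⊤ : Subgroup (FreeGroup ι)), π.ker⁆ := by
  intro ι π hπ
  obtain ⟨e⟩ := hab
  obtain ⟨k, hk⟩ : ∃ k, Nat.card G = 3 ^ k := hcard.elim (⟨8, ·⟩) (⟨9, ·⟩)
  have : Finite G := Nat.finite_of_card_ne_zero (by rw [hk]; positivity)
  refine le_antisymm ?_ (le_inf (commutator_le_right _ _) (commutator_mono le_top le_top))
  refine inf_commutator_le_of_forall_toKerModCommPow_eq_one hπ three_ne_zero hk fun x hxF => ?_
  by_contra hx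
  have h4 := finrank_add_one_le_finrank_H2 hπ e hxF hx
  have hW : Module.finrank (ZMod 3) (ZMod 3 × ZMod 3 × ZMod 3) = 3 := by simp
  change Module.finrank _ (groupCohomology.H2 _) = 3 at hd2
  omega
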